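/- For every natural number n ≥ 1, the improper integral over ℝ of the generalized binomial coefficient α ↦ Γ(n+1) / (Γ(n+1−α)·Γ(1+α)) equals 2^n. -/

import Mathlib

open Real MeasureTheory

/-!
The reciprocal Gamma recursion `1/Γ(s) = s/Γ(s+1)` gives Pascal's rule
`binom(n+1, α) = binom(n, α) + binom(n, α-1)` for all real `α`, and translation invariance of
Lebesgue measure then doubles the integral at each step. For `n = 1` the reflection formula gives
`binom(1, α) = sinc(πα) + sinc(π(1-α))`, the Fourier transform of `t ↦ 1 + e^{2πit}` on
`[-1/2, 1/2]`; Fourier inversion at `t = 0` shows that its integral is `2`.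
-/

open FourierTransform Set

noncomputable def genBinom (x α : ℝ) : ℝ :=
  Gamma (x + 1) / (Gamma (x + 1 - α) * Gamma (1 + α))

-- Mathlib's `Gamma` vanishes at the poles, which makes both identities hold for every `s`.
theorem Real.inv_Gamma_eq_self_mul_inv_Gamma_add_one (s : ℝ) :
    (Gamma s)⁻¹ = s * (Gamma (s + 1))⁻¹ := by
  rcases eq_or_ne s 0 with rfl | hs
  · simp
  · rw [Gamma_add_one hs, mul_inv, ← mul_assoc, mul_inv_cancel₀ hs, one_mul]

theorem Real.inv_Gamma_mul_inv_Gamma_one_sub (s : ℝ) :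
    (Gamma s)⁻¹ * (Gamma (1 - s))⁻¹ = sin (π * s) / π := by
  rw [← mul_inv, Gamma_mul_Gamma_one_sub, inv_div]

theorem genBinom_add_one {x : ℝ} (hx : x + 1 ≠ 0) (α : ℝ) :
    genBinom (x + 1) α = genBinom x α + genBinom x (α - 1) := by
  simp only [genBinom, div_eq_mul_inv, mul_inv]
  rw [show x + 1 + 1 - α = x + 1 - α + 1 by ring, show x + 1 - (α - 1) = x + 1 - α + 1 by ring,
    show 1 + (α - 1) = α by ring, add_comm 1 α, Gamma_add_one hx,
    inv_Gamma_eq_self_mul_inv_Gamma_add_one (x + 1 - α),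
    inv_Gamma_eq_self_mul_inv_Gamma_add_one α]
  ring

theorem sinc_add_sinc_one_sub {α : ℝ} (h₀ : α ≠ 0) (h₁ : α ≠ 1) :
    sinc (π * α) + sinc (π * (1 - α)) = sin (π * α) / (π * α * (1 - α)) := by
  have h₁' : 1 - α ≠ 0 := sub_ne_zero.mpr h₁.symm
  rw [sinc_of_ne_zero (by positivity), sinc_of_ne_zero (by positivity), mul_one_sub, sin_pi_sub]
  field_simp
  ring

theorem genBinom_one (α : ℝ) : genBinom 1 α = sinc (π * α) + sinc (π * (1 - α)) := by
  rcases eq_or_ne α 0 with rfl | h₀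
  · norm_num [genBinom, sinc_of_ne_zero pi_ne_zero]
  rcases eq_or_ne α 1 with rfl | h₁
  · norm_num [genBinom, sinc_of_ne_zero pi_ne_zero]
  have h₁' : 1 - α ≠ 0 := sub_ne_zero.mpr h₁.symm
  have hreflection : α * (1 - α) * genBinom 1 α = sin (π * α) / π := by
    rw [← inv_Gamma_mul_inv_Gamma_one_sub, inv_Gamma_eq_self_mul_inv_Gamma_add_one α,
      inv_Gamma_eq_self_mul_inv_Gamma_add_one (1 - α)]
    norm_num [genBinom, div_eq_mul_inv, mul_inv]
    rw [show 1 - α + 1 = 2 - α by ring, add_comm α]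
    ring
  rw [eq_div_iff pi_ne_zero] at hreflection
  rw [sinc_add_sinc_one_sub h₀ h₁, eq_div_iff (by positivity)]
  linear_combination hreflection

theorem abs_sinc_add_sinc_one_sub_le (α : ℝ) :
    |sinc (π * α) + sinc (π * (1 - α))| ≤ 10 * (1 + α ^ 2)⁻¹ := by
  rw [← div_eq_mul_inv, le_div_iff₀ (by positivity)]
  rcases le_or_gt |α| 2 with hα | hα
  · have hsq : α ^ 2 ≤ 4 := by nlinarith [sq_abs α, abs_nonneg α]
    have := (abs_add_le _ _).trans
      (add_le_add (abs_sinc_le_one (π * α)) (abs_sinc_le_one (π * (1 - α))))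
    nlinarith [abs_nonneg (sinc (π * α) + sinc (π * (1 - α)))]
  · have h₀ : α ≠ 0 := by rintro rfl; norm_num at hα
    have h₁ : α ≠ 1 := by rintro rfl; norm_num at hα
    have hden : 1 + α ^ 2 ≤ 10 * (π * |α| * |1 - α|) := by
      have hprod : α ^ 2 - |α| ≤ |α| * |1 - α| := by
        rw [← abs_mul, mul_one_sub, ← sq]
        calc α ^ 2 - |α| ≤ |α ^ 2| - |α| := by rw [abs_sq]
          _ ≤ |α - α ^ 2| := by rw [abs_sub_comm]; exact abs_sub_abs_le_abs_sub _ _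
      have hsq : 2 * |α| < α ^ 2 := by nlinarith [sq_abs α]
      have hpi : 3 * (|α| * |1 - α|) ≤ π * (|α| * |1 - α|) :=
        mul_le_mul_of_nonneg_right pi_gt_three.le (by positivity)
      nlinarith
    rw [sinc_add_sinc_one_sub h₀ h₁, abs_div, abs_mul, abs_mul, abs_of_pos pi_pos]
    calc |sin (π * α)| / (π * |α| * |1 - α|) * (1 + α ^ 2)
        ≤ 1 / (π * |α| * |1 - α|) * (10 * (π * |α| * |1 - α|)) := by
          gcongr
          exact abs_sin_le_one _
      _ = 10 := by
        have : α - 1 ≠ 0 := sub_ne_zero.mpr h₁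
        field_simp

theorem integrable_sinc_add_sinc_one_sub :
    Integrable fun α : ℝ => sinc (π * α) + sinc (π * (1 - α)) :=
  (integrable_inv_one_add_sq.const_mul 10).mono' (by fun_prop)
    (ae_of_all _ abs_sinc_add_sinc_one_sub_le)

theorem integral_exp_two_pi_mul_I (β : ℝ) :
    ∫ v in (-1 / 2 : ℝ)..1 / 2, Complex.exp (↑(2 * π * β * v) * Complex.I) = sinc (π * β) := by
  rcases eq_or_ne β 0 with rfl | hβ
  · norm_num
  have hc : 2 * π * β ≠ 0 := by positivity
  rw [intervalIntegral.integral_comp_mul_left (fun t : ℝ => Complex.exp (t * Complex.I)) hc,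
    show 2 * π * β * (-1 / 2) = -(π * β) by ring, show 2 * π * β * (1 / 2) = π * β by ring,
    integral_exp_mul_I_eq_sinc, Complex.real_smul]
  have : (β : ℂ) ≠ 0 := Complex.ofReal_ne_zero.mpr hβ
  push_cast
  field_simp

noncomputable def onePlusExpIcc : ℝ → ℂ :=
  indicator (Icc (-1 / 2) (1 / 2)) fun t => 1 + Complex.exp (↑(2 * π * t) * Complex.I)

theorem fourier_onePlusExpIcc (α : ℝ) :
    𝓕 onePlusExpIcc α = ↑(sinc (π * α) + sinc (π * (1 - α))) := by
  have hintegrand : ∀ v : ℝ, Complex.exp (↑(-2 * π * v * α) * Complex.I) • onePlusExpIcc v =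
      indicator (Icc (-1 / 2) (1 / 2)) (fun v => Complex.exp (↑(2 * π * (-α) * v) * Complex.I) +
        Complex.exp (↑(2 * π * (1 - α) * v) * Complex.I)) v := by
    intro v
    by_cases hv : v ∈ Icc (-1 / 2 : ℝ) (1 / 2)
    · simp only [onePlusExpIcc, indicator_of_mem hv, smul_eq_mul, mul_add, mul_one,
        ← Complex.exp_add]
      congr 3 <;> push_cast <;> ring
    · simp only [onePlusExpIcc, indicator_of_notMem hv, smul_zero]
  simp_rw [fourier_real_eq_integral_exp_smul, hintegrand]
  rw [integral_indicator measurableSet_Icc, integral_Icc_eq_integral_Ioc,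
    ← intervalIntegral.integral_of_le (by norm_num),
    intervalIntegral.integral_add (by apply Continuous.intervalIntegrable; fun_prop)
      (by apply Continuous.intervalIntegrable; fun_prop),
    integral_exp_two_pi_mul_I, integral_exp_two_pi_mul_I, mul_neg, sinc_neg]
  push_cast
  rfl

theorem integral_sinc_add_sinc_one_sub :
    ∫ α : ℝ, sinc (π * α) + sinc (π * (1 - α)) = 2 := by
  have hint : Integrable (𝓕 onePlusExpIcc) := by
    rw [funext fourier_onePlusExpIcc]
    exact integrable_sinc_add_sinc_one_sub.ofReal
  have hcont : ContinuousAt onePlusExpIcc 0 := by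
    refine ContinuousAt.congr (f := fun t : ℝ => 1 + Complex.exp (↑(2 * π * t) * Complex.I))
      (by fun_prop) ?_
    filter_upwards [Icc_mem_nhds (by norm_num : (-1 / 2 : ℝ) < 0) (by norm_num : (0 : ℝ) < 1 / 2)]
      with t ht
    rw [onePlusExpIcc, indicator_of_mem ht]
  have inversion := (integrable_indicator_iff measurableSet_Icc).2
    (by apply Continuous.integrableOn_Icc; fun_prop) |>.fourierInv_fourier_eq hint hcont
  rw [fourierInv_eq, funext fourier_onePlusExpIcc, onePlusExpIcc,
    indicator_of_mem (by norm_num : (0 : ℝ) ∈ Icc (-1 / 2) (1 / 2))] at inversion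
  simp only [inner_zero_right, AddChar.map_zero_eq_one, one_smul] at inversion
  norm_num at inversion
  exact_mod_cast inversion

theorem integrable_genBinom_natCast {n : ℕ} (hn : 1 ≤ n) : Integrable (genBinom n) := by
  induction n, hn using Nat.le_induction with
  | base => simpa [funext genBinom_one] using integrable_sinc_add_sinc_one_sub
  | succ m _ ih =>
    rw [Nat.cast_succ, funext (genBinom_add_one (by positivity))]
    exact ih.add (ih.comp_sub_right 1)

theorem integral_genBinom_natCast {n : ℕ} (hn : 1 ≤ n) : ∫ α, genBinom n α = 2 ^ n := by
  induction n, hn using Nat.le_induction with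
  | base => simpa [genBinom_one] using integral_sinc_add_sinc_one_sub
  | succ m hm ih =>
    have hint := integrable_genBinom_natCast hm
    rw [Nat.cast_succ, funext (genBinom_add_one (by positivity)),
      integral_add hint (hint.comp_sub_right 1), integral_sub_right_eq_self, ih, pow_succ]
    ring

theorem integral_generalized_binomial (n : ℕ) (hn : 1 ≤ n) :
    ∫ α : ℝ, Real.Gamma ((n : ℝ) + 1) / (Real.Gamma ((n : ℝ) + 1 - α) * Real.Gamma (1 + α)) =
      2 ^ n :=
  integral_genBinom_natCast hn
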